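/- There exists a Banach space E and a map f : E → E that is Lipschitz continuous on every compact subset of E (hence generates a composition operator mapping BV₁([0,1],E) into itself), but such that the composition operator C_f is not locally bounded: specifically, in E = ℓ²(ℝ) the map f((ξₙ)) = (sup_n n(2|ξₙ| - 1), 0, 0, ...) satisfies ‖C_f(x_k)‖₁ = k for the constant maps x_k ≡ e_k, while ‖x_k‖₁ = 1. -/

import Mathlib

/-!
Write `ellTwoF ξ = g ξ • e₀` with `g ξ = sup_n (n + 1) (2 |ξₙ| - 1)`. If every point of a set has
`|ξₙ| ≤ 1/4` for all `n > N`, the terms with `n > N` are `≤ -1 ≤ g`, so on that set `g` is a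
maximum of `N + 1` functions that are `2 (N + 1)`-Lipschitz. Totally bounded subsets of `ℓ²` have
uniformly small tails, so `ellTwoF` is Lipschitz on them. A map `x` of bounded variation has
totally bounded range, because `‖x b - x a‖` is dominated by the increment of its variation
function `s ↦ var(x, [0, s])`; hence composition with `ellTwoF` preserves bounded variation. Yet
`g (e_k) = k + 1` while `‖e_k‖ = 1`.
-/

open scoped ENNReal NNReal

noncomputable def pVar {E : Type*} [NormedAddCommGroup E] (p a b : ℝ) (x : ℝ → E) : ℝ≥0∞ :=
  ⨆ (n : ℕ) (t : Fin (n + 1) → ℝ) (_ : StrictMono t) (_ : t 0 = a)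
    (_ : t (Fin.last n) = b),
    ∑ i : Fin n, (‖x (t i.succ) - x (t i.castSucc)‖₊ : ℝ≥0∞) ^ p


/-- The map `f : ℓ²(ℝ) → ℓ²(ℝ)` given by
`f((ξₙ)ₙ) = (sup_n n (2|ξₙ| - 1), 0, 0, …)` (the index `n : ℕ` here corresponds to the
index `n + 1 ∈ {1, 2, …}` in the classical formulation). -/
noncomputable def ellTwoF (ξ : lp (fun _ : ℕ => ℝ) 2) : lp (fun _ : ℕ => ℝ) 2 :=
  lp.single 2 0 (⨆ n : ℕ, ((n : ℝ) + 1) * (2 * |ξ n| - 1))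

open Set Filter

theorem TotallyBounded.image_of_dist_le_dist {α β γ : Type*} [PseudoMetricSpace β]
    [PseudoMetricSpace γ] {f : α → β} {g : α → γ} {s : Set α} (hg : TotallyBounded (g '' s))
    (h : ∀ a ∈ s, ∀ b ∈ s, dist (f a) (f b) ≤ dist (g a) (g b)) : TotallyBounded (f '' s) := by
  refine Metric.totallyBounded_iff.2 fun ε hε => ?_
  obtain ⟨t, hts, htf, hcover⟩ := hg.exists_subset (Metric.dist_mem_uniformity hε)
  obtain ⟨u, hus, huf, rfl⟩ := exists_subset_image_finite_and.1 ⟨t, hts, htf, rfl⟩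
  refine ⟨f '' u, huf.image f, ?_⟩
  rintro _ ⟨a, ha, rfl⟩
  obtain ⟨_, ⟨b, hb, rfl⟩, hab⟩ := mem_iUnion₂.1 (hcover ⟨a, ha, rfl⟩)
  exact mem_biUnion (mem_image_of_mem f hb) ((h a ha b (hus hb)).trans_lt hab)

section pVar

variable {E : Type*} [NormedAddCommGroup E] {x : ℝ → E} {a b c : ℝ}

theorem pVar_one_eq :
    pVar 1 a b x = ⨆ (n : ℕ) (t : Fin (n + 1) → ℝ) (_ : StrictMono t) (_ : t 0 = a)
      (_ : t (Fin.last n) = b), ∑ i : Fin n, edist (x (t i.succ)) (x (t i.castSucc)) := by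
  simp only [pVar, ENNReal.rpow_one, edist_eq_enorm_sub, enorm_eq_nnnorm]

theorem sum_edist_le_pVar_one {n : ℕ} {t : Fin (n + 1) → ℝ} (ht : StrictMono t) (h0 : t 0 = a)
    (hn : t (Fin.last n) = b) :
    ∑ i : Fin n, edist (x (t i.succ)) (x (t i.castSucc)) ≤ pVar 1 a b x := by
  rw [pVar_one_eq]
  exact le_iSup_of_le n <| le_iSup_of_le t <| le_iSup_of_le ht <| le_iSup_of_le h0 <|
    le_iSup_of_le hn le_rfl

theorem pVar_one_le {C : ℝ≥0∞} (h : ∀ (n : ℕ) (t : Fin (n + 1) → ℝ), StrictMono t → t 0 = a →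
      t (Fin.last n) = b → ∑ i : Fin n, edist (x (t i.succ)) (x (t i.castSucc)) ≤ C) :
    pVar 1 a b x ≤ C := by
  rw [pVar_one_eq]
  exact iSup_le fun n => iSup_le fun t => iSup_le fun ht => iSup_le fun h0 => iSup_le (h n t ht h0)

theorem pVar_one_const (a b : ℝ) (y : E) : pVar 1 a b (fun _ => y) = 0 :=
  nonpos_iff_eq_zero.1 <| pVar_one_le fun _ _ _ _ _ => by simp

theorem exists_partition_of_le (hab : a ≤ b) :
    ∃ (n : ℕ) (t : Fin (n + 1) → ℝ), StrictMono t ∧ t 0 = a ∧ t (Fin.last n) = b := by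
  rcases hab.eq_or_lt with rfl | hab
  · exact ⟨0, fun _ => a, Fin.strictMono_iff_lt_succ.2 fun i => i.elim0, rfl, rfl⟩
  · refine ⟨1, ![a, b], ?_, rfl, rfl⟩
    simpa [Fin.strictMono_iff_lt_succ] using hab

theorem sum_edist_add_edist_le_pVar_one {n : ℕ} {t : Fin (n + 1) → ℝ} (ht : StrictMono t)
    (h0 : t 0 = c) (hn : t (Fin.last n) = a) (hab : a < b) :
    ∑ i : Fin n, edist (x (t i.succ)) (x (t i.castSucc)) + edist (x b) (x a) ≤ pVar 1 c b x := by
  have hsnoc : StrictMono (Fin.snoc t b : Fin (n + 2) → ℝ) := by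
    refine Fin.strictMono_iff_lt_succ.2 fun i => ?_
    induction i using Fin.lastCases with
    | last => simpa [hn] using hab
    | cast j =>
      rw [Fin.succ_castSucc, Fin.snoc_castSucc, Fin.snoc_castSucc]
      exact ht j.castSucc_lt_succ
  refine le_of_eq_of_le ?_ (sum_edist_le_pVar_one hsnoc ?_ (by simp))
  · simp [Fin.sum_univ_castSucc, hn, Fin.succ_castSucc, -Fin.castSucc_succ]
  · simpa using h0

theorem pVar_one_add_edist_le (hca : c ≤ a) (hab : a < b) :
    pVar 1 c a x + edist (x b) (x a) ≤ pVar 1 c b x := by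
  have hle : edist (x b) (x a) ≤ pVar 1 c b x := by
    obtain ⟨n, t, ht, h0, hn⟩ := exists_partition_of_le hca
    exact le_add_self.trans (sum_edist_add_edist_le_pVar_one ht h0 hn hab)
  calc pVar 1 c a x + edist (x b) (x a)
      ≤ pVar 1 c b x - edist (x b) (x a) + edist (x b) (x a) := by
        gcongr
        exact pVar_one_le fun n t ht h0 hn => ENNReal.le_sub_of_add_le_right (edist_ne_top _ _)
          (sum_edist_add_edist_le_pVar_one ht h0 hn hab)
    _ = pVar 1 c b x := tsub_add_cancel_of_le hle

theorem pVar_one_mono (hca : c ≤ a) (hab : a ≤ b) : pVar 1 c a x ≤ pVar 1 c b x := by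
  rcases hab.eq_or_lt with rfl | hab
  · rfl
  · exact le_self_add.trans (pVar_one_add_edist_le hca hab)

theorem norm_sub_le_toReal_pVar_one_sub (hca : c ≤ a) (hab : a ≤ b) (hb : pVar 1 c b x ≠ ⊤) :
    ‖x b - x a‖ ≤ (pVar 1 c b x).toReal - (pVar 1 c a x).toReal := by
  rcases hab.eq_or_lt with rfl | hab
  · simp
  have ha : pVar 1 c a x ≠ ⊤ := ne_top_of_le_ne_top hb (pVar_one_mono hca hab.le)
  have h := ENNReal.toReal_mono hb (pVar_one_add_edist_le hca hab)
  rw [ENNReal.toReal_add ha (edist_ne_top _ _), edist_dist, dist_eq_norm,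
    ENNReal.toReal_ofReal (norm_nonneg _)] at h
  linarith

theorem totallyBounded_image_of_pVar_one_ne_top (hx : pVar 1 a b x ≠ ⊤) :
    TotallyBounded (x '' Icc a b) := by
  set v : ℝ → ℝ := fun s => (pVar 1 a s x).toReal
  have hv : ∀ s ∈ Icc a b, ∀ r ∈ Icc a b, s ≤ r → dist (x s) (x r) ≤ dist (v s) (v r) := by
    intro s hs r hr hsr
    rw [dist_comm, dist_eq_norm, dist_comm, Real.dist_eq]
    exact (norm_sub_le_toReal_pVar_one_sub hs.1 hsr
      (ne_top_of_le_ne_top hx (pVar_one_mono (hs.1.trans hsr) hr.2))).trans (le_abs_self _)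
  refine TotallyBounded.image_of_dist_le_dist (g := v) ?_ fun s hs r hr => ?_
  · refine (totallyBounded_Icc 0 (v b)).subset ?_
    rintro _ ⟨s, hs, rfl⟩
    exact ⟨ENNReal.toReal_nonneg, ENNReal.toReal_mono hx (pVar_one_mono hs.1 hs.2)⟩
  · rcases le_total s r with hsr | hrs
    · exact hv s hs r hr hsr
    · rw [dist_comm, dist_comm (v s)]
      exact hv r hr s hs hrs

theorem pVar_one_comp_le {F : Type*} [NormedAddCommGroup F] {f : E → F} {K : ℝ≥0}
    (hf : LipschitzOnWith K f (x '' Icc a b)) :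
    pVar 1 a b (fun t => f (x t)) ≤ K * pVar 1 a b x := by
  refine pVar_one_le fun n t ht h0 hn => ?_
  have hmem : ∀ i, x (t i) ∈ x '' Icc a b := fun i =>
    mem_image_of_mem x ⟨h0 ▸ ht.monotone (Fin.zero_le i), hn ▸ ht.monotone (Fin.le_last i)⟩
  calc ∑ i : Fin n, edist (f (x (t i.succ))) (f (x (t i.castSucc)))
      ≤ ∑ i : Fin n, K * edist (x (t i.succ)) (x (t i.castSucc)) :=
        Finset.sum_le_sum fun i _ => hf (hmem _) (hmem _)
    _ = K * ∑ i : Fin n, edist (x (t i.succ)) (x (t i.castSucc)) := (Finset.mul_sum ..).symm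
    _ ≤ K * pVar 1 a b x := by gcongr; exact sum_edist_le_pVar_one ht h0 hn

end pVar

namespace lp

variable {α : Type*} {E : α → Type*} [∀ i, NormedAddCommGroup (E i)] {p : ℝ≥0∞} {ε : ℝ}

theorem eventually_norm_apply_lt (hp : p ≠ ⊤) (hp0 : p ≠ 0) (f : lp E p) (hε : 0 < ε) :
    ∀ᶠ i in cofinite, ‖f i‖ < ε := by
  have hp' : 0 < p.toReal := ENNReal.toReal_pos hp0 hp
  filter_upwards [((lp.memℓp f).summable hp').tendsto_cofinite_zero.eventually
    (gt_mem_nhds (Real.rpow_pos_of_pos hε p.toReal))] with i hi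
  exact (Real.rpow_lt_rpow_iff (norm_nonneg _) hε.le hp').1 hi

variable [Fact (1 ≤ p)]

theorem eventually_forall_norm_apply_lt_of_totallyBounded (hp : p ≠ ⊤) {S : Set (lp E p)}
    (hS : TotallyBounded S) (hε : 0 < ε) : ∀ᶠ i in cofinite, ∀ f ∈ S, ‖f i‖ < ε := by
  have hp0 : p ≠ 0 := (zero_lt_one.trans_le Fact.out).ne'
  obtain ⟨t, htf, hcover⟩ := Metric.totallyBounded_iff.1 hS (ε / 2) (half_pos hε)
  filter_upwards [htf.eventually_all.2 fun y _ => eventually_norm_apply_lt hp hp0 y (half_pos hε)]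
    with i hi f hf
  obtain ⟨y, hy, hfy⟩ := mem_iUnion₂.1 (hcover hf)
  have hfy' : ‖(f - y) i‖ < ε / 2 :=
    (norm_apply_le_norm hp0 (f - y) i).trans_lt (dist_eq_norm f y ▸ hfy)
  calc ‖f i‖ = ‖(f - y) i + y i‖ := by simp
    _ ≤ ‖(f - y) i‖ + ‖y i‖ := norm_add_le _ _
    _ < ε := by linarith [hi y hy]

end lp

noncomputable def ellTwoSup (ξ : lp (fun _ : ℕ => ℝ) 2) : ℝ :=
  ⨆ n : ℕ, ((n : ℝ) + 1) * (2 * |ξ n| - 1)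

theorem ellTwoF_eq (ξ : lp (fun _ : ℕ => ℝ) 2) : ellTwoF ξ = lp.single 2 0 (ellTwoSup ξ) := rfl

theorem isometry_lp_single_zero : Isometry (lp.single (E := fun _ : ℕ => ℝ) 2 0) :=
  Isometry.of_dist_eq fun a b => by
    rw [dist_eq_norm, dist_eq_norm, ← lp.single_sub, lp.norm_single (by norm_num)]

theorem bddAbove_range_ellTwoSup (ξ : lp (fun _ : ℕ => ℝ) 2) :
    BddAbove (range fun n : ℕ => ((n : ℝ) + 1) * (2 * |ξ n| - 1)) := by
  refine (isBoundedUnder_of_eventually_le (a := 0) ?_).bddAbove_range_of_cofinite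
  filter_upwards [lp.eventually_norm_apply_lt (by norm_num) (by norm_num) ξ one_half_pos] with n hn
  rw [Real.norm_eq_abs] at hn
  exact mul_nonpos_of_nonneg_of_nonpos (by positivity) (by linarith)

theorem neg_one_le_ellTwoSup (ξ : lp (fun _ : ℕ => ℝ) 2) : -1 ≤ ellTwoSup ξ :=
  le_ciSup_of_le (bddAbove_range_ellTwoSup ξ) 0 (by simp)

theorem ellTwoSup_le_add {N : ℕ} {ξ : lp (fun _ : ℕ => ℝ) 2} (hξ : ∀ n, N < n → |ξ n| ≤ 1 / 4)
    (η : lp (fun _ : ℕ => ℝ) 2) :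
    ellTwoSup ξ ≤ ellTwoSup η + 2 * (N + 1) * dist ξ η := by
  refine ciSup_le fun n => ?_
  rcases le_or_gt n N with hn | hn
  · have hcoord : |ξ n| - |η n| ≤ dist ξ η := by
      refine (abs_sub_abs_le_abs_sub _ _).trans ?_
      simpa [dist_eq_norm] using lp.norm_apply_le_norm (by norm_num) (ξ - η) n
    have hn' : (n : ℝ) + 1 ≤ N + 1 := by exact_mod_cast Nat.succ_le_succ hn
    calc ((n : ℝ) + 1) * (2 * |ξ n| - 1)
        = (n + 1) * (2 * |η n| - 1) + 2 * (n + 1) * (|ξ n| - |η n|) := by ring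
      _ ≤ ellTwoSup η + 2 * (N + 1) * dist ξ η := by
        refine add_le_add (le_ciSup (bddAbove_range_ellTwoSup η) n) ?_
        exact (mul_le_mul_of_nonneg_left hcoord (by positivity)).trans (by gcongr)
  · have h1 : (1 : ℝ) ≤ n := by exact_mod_cast (Nat.zero_le N).trans_lt hn
    have h2 := hξ n hn
    calc ((n : ℝ) + 1) * (2 * |ξ n| - 1) ≤ -1 := by nlinarith
      _ ≤ ellTwoSup η := neg_one_le_ellTwoSup η
      _ ≤ ellTwoSup η + 2 * (N + 1) * dist ξ η := le_add_of_nonneg_right (by positivity)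

theorem lipschitzOnWith_ellTwoF (N : ℕ) :
    LipschitzOnWith (2 * (N + 1)) ellTwoF {ξ | ∀ n, N < n → |ξ n| ≤ 1 / 4} := by
  have hsup : LipschitzOnWith (2 * (N + 1)) ellTwoSup {ξ | ∀ n, N < n → |ξ n| ≤ 1 / 4} :=
    LipschitzOnWith.of_le_add_mul _ fun ξ hξ η _ => by
      simpa using ellTwoSup_le_add hξ η
  have h := isometry_lp_single_zero.lipschitz.comp_lipschitzOnWith hsup
  rw [one_mul] at h
  exact h

theorem exists_lipschitzOnWith_ellTwoF {S : Set (lp (fun _ : ℕ => ℝ) 2)} (hS : TotallyBounded S) :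
    ∃ K : ℝ≥0, LipschitzOnWith K ellTwoF S := by
  obtain ⟨N, hN⟩ := eventually_atTop.1 <| Nat.cofinite_eq_atTop ▸
    lp.eventually_forall_norm_apply_lt_of_totallyBounded (by norm_num) hS (ε := 1 / 4) (by norm_num)
  exact ⟨_, (lipschitzOnWith_ellTwoF N).mono fun ξ hξ n hn => (hN n hn.le ξ hξ).le⟩

theorem ellTwoSup_single (k : ℕ) : ellTwoSup (lp.single 2 k 1) = k + 1 := by
  refine le_antisymm (ciSup_le fun n => ?_) (le_ciSup_of_le (bddAbove_range_ellTwoSup _) k ?_)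
  · rcases eq_or_ne n k with rfl | hnk
    · simp; norm_num
    · simp [hnk]
      linarith [Nat.cast_nonneg (α := ℝ) n, Nat.cast_nonneg (α := ℝ) k]
  · simp; norm_num

theorem norm_ellTwoF_single (k : ℕ) : ‖ellTwoF (lp.single 2 k 1)‖ = k + 1 := by
  rw [ellTwoF_eq, lp.norm_single (by norm_num), ellTwoSup_single, Real.norm_eq_abs,
    abs_of_nonneg (by positivity)]

/-- In `E = ℓ²(ℝ)` the map `ellTwoF` is Lipschitz continuous on every compact subset of
`E` (hence generates a composition operator mapping `BV₁([0,1],E)` into itself), yet the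
composition operator it generates is not locally bounded: for the constant maps
`x_k ≡ e_k` one has `‖x_k‖₁ = 1` while `‖C_f(x_k)‖₁ = k + 1` (where `e_k` is the `k`-th
standard unit vector, `k + 1` being its index in the classical `1`-based enumeration). -/
theorem ellTwoF_not_locally_bounded :
    (∀ K : Set (lp (fun _ : ℕ => ℝ) 2), IsCompact K → ∃ L : ℝ,
        ∀ u ∈ K, ∀ w ∈ K, ‖ellTwoF u - ellTwoF w‖ ≤ L * ‖u - w‖) ∧
    (∀ x : ℝ → lp (fun _ : ℕ => ℝ) 2, pVar 1 0 1 x ≠ ⊤ →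
        pVar 1 0 1 (fun t => ellTwoF (x t)) ≠ ⊤) ∧
    (∀ k : ℕ,
        ‖(lp.single 2 k 1 : lp (fun _ : ℕ => ℝ) 2)‖
            + (pVar 1 0 1 (fun _ : ℝ => (lp.single 2 k 1 : lp (fun _ : ℕ => ℝ) 2))).toReal = 1 ∧
        ‖ellTwoF ((lp.single 2 k 1 : lp (fun _ : ℕ => ℝ) 2))‖
            + (pVar 1 0 1 (fun _ : ℝ => ellTwoF ((lp.single 2 k 1 : lp (fun _ : ℕ => ℝ) 2)))).toReal
            = (k : ℝ) + 1) ∧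
    ¬ ∃ M : ℝ, ∀ x : ℝ → lp (fun _ : ℕ => ℝ) 2, pVar 1 0 1 x ≠ ⊤ →
        ‖x 0‖ + (pVar 1 0 1 x).toReal ≤ 1 →
        ‖ellTwoF (x 0)‖ + (pVar 1 0 1 (fun t => ellTwoF (x t))).toReal ≤ M := by
  have he : ∀ k : ℕ, ‖(lp.single 2 k 1 : lp (fun _ : ℕ => ℝ) 2)‖ = 1 := fun k => by
    simp [lp.norm_single]
  refine ⟨fun K hK => ?_, fun x hx => ?_, fun k => ?_, ?_⟩
  · obtain ⟨L, hL⟩ := exists_lipschitzOnWith_ellTwoF hK.totallyBounded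
    exact ⟨L, fun u hu w hw => by simpa only [dist_eq_norm] using hL.dist_le_mul u hu w hw⟩
  · obtain ⟨L, hL⟩ := exists_lipschitzOnWith_ellTwoF (totallyBounded_image_of_pVar_one_ne_top hx)
    exact ne_top_of_le_ne_top (ENNReal.mul_ne_top ENNReal.coe_ne_top hx) (pVar_one_comp_le hL)
  · simp only [pVar_one_const, ENNReal.toReal_zero, add_zero, he, norm_ellTwoF_single, and_self]
  · rintro ⟨M, hM⟩
    have h := hM (fun _ => lp.single 2 ⌈M⌉₊ 1) (by simp [pVar_one_const])
      (by simp [pVar_one_const, he])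
    simp only [pVar_one_const, ENNReal.toReal_zero, add_zero, norm_ellTwoF_single] at h
    linarith [Nat.le_ceil M]
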